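/- If M is a minimal subgraph of ℤⁿ, then every vertex x∈M has at least n neighbors in M; moreover there is no edge {x,y} inside M with both deg(x)=n and deg(y)=n in M. -/

import Mathlib

open Set

/-- Vertices of the integer lattice `ℤⁿ`. -/
abbrev Vtx (n : ℕ) := Fin n → ℤ

/-- Adjacency in the integer lattice: Euclidean (equivalently ℓ¹) distance one. -/
def ZAdj {n : ℕ} (x y : Vtx n) : Prop := (∑ i, (x i - y i).natAbs) = 1

/-- Exterior vertex boundary. -/
def extB {n : ℕ} (Ω : Set (Vtx n)) : Set (Vtx n) := {z | z ∉ Ω ∧ ∃ w ∈ Ω, ZAdj z w}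

/-- Closure `Ω̄ = Ω ∪ τΩ`. -/
def clos {n : ℕ} (Ω : Set (Vtx n)) : Set (Vtx n) := Ω ∪ extB Ω

/-- Directed version of `E_Ω = E(Ω, Ω̄)`. -/
def dirE {n : ℕ} (Ω : Set (Vtx n)) : Set (Vtx n × Vtx n) :=
  {p | ZAdj p.1 p.2 ∧ p.1 ∈ clos Ω ∧ p.2 ∈ clos Ω ∧ (p.1 ∈ Ω ∨ p.2 ∈ Ω)}

/-- Directed edge boundary of `F`; each undirected boundary edge is counted once. -/
def dirBdry {n : ℕ} (F : Set (Vtx n)) : Set (Vtx n × Vtx n) :=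
  {p | ZAdj p.1 p.2 ∧ p.1 ∈ F ∧ p.2 ∉ F}

/-- `M ⊆ ℤⁿ` is a minimal (area-minimizing) subgraph. -/
def IsMinimal {n : ℕ} (M : Set (Vtx n)) : Prop :=
  ∀ Ω : Set (Vtx n), Ω.Finite → ∀ F : Set (Vtx n), symmDiff F M ⊆ Ω →
    (dirBdry M ∩ dirE Ω).ncard ≤ (dirBdry F ∩ dirE Ω).ncard

/-- Vertex boundary `δM`. -/
def vB {n : ℕ} (M : Set (Vtx n)) : Set (Vtx n) := {x | x ∈ M ∧ ∃ y, y ∉ M ∧ ZAdj x y}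

/-- Degree of `x` in the subgraph induced on `M`. -/
noncomputable def degIn {n : ℕ} (M : Set (Vtx n)) (x : Vtx n) : ℕ :=
  ({y | y ∈ M ∧ ZAdj x y}).ncard

/-- Combinatorial (graph) distance in `ℤⁿ`, which equals the ℓ¹ distance. -/
def latDist {n : ℕ} (x y : Vtx n) : ℕ := ∑ i, (x i - y i).natAbs

/-- The ∞-normed ball `B̂_r(x)`. -/
def Bhat {n : ℕ} (x : Vtx n) (r : ℕ) : Set (Vtx n) := {y | ∀ i, (y i - x i).natAbs ≤ r}

/-- The set of vertices of `M` lying in some unit `n`-cube all of whose vertices are in `M`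
(the vertices of the `n`-skeleton `Mⁿ`). -/
def skel {n : ℕ} (M : Set (Vtx n)) : Set (Vtx n) :=
  {x | x ∈ M ∧ ∃ v : Vtx n, (∀ i, x i = v i ∨ x i = v i + 1) ∧
    ∀ y : Vtx n, (∀ i, y i = v i ∨ y i = v i + 1) → y ∈ M}

lemma zadj_symm {n : ℕ} {x y : Vtx n} (h : ZAdj x y) : ZAdj y x := by
  unfold ZAdj at h ⊢
  rw [Finset.sum_congr rfl (fun i _ => by rw [← neg_sub (x i) (y i), Int.natAbs_neg])]
  exact h

lemma zadj_irrefl {n : ℕ} (x : Vtx n) : ¬ ZAdj x x := by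
  simp [ZAdj]

lemma zadj_ne {n : ℕ} {x y : Vtx n} (h : ZAdj x y) : x ≠ y := by
  rintro rfl; exact zadj_irrefl x h

lemma zadj_npos {n : ℕ} {x y : Vtx n} (h : ZAdj x y) : 0 < n := by
  by_contra hn
  have : n = 0 := by omega
  subst this
  simpa [ZAdj] using h

lemma zadj_iff {n : ℕ} {x y : Vtx n} :
    ZAdj x y ↔ ∃ i : Fin n, ∃ e : ℤ, e.natAbs = 1 ∧ y = Function.update x i (x i + e) := by
  constructor
  · intro h
    obtain ⟨i, -, hi⟩ := Finset.exists_ne_zero_of_sum_ne_zero (by rw [h]; omega :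
      ∑ i, (x i - y i).natAbs ≠ 0)
    have hsplit := Finset.add_sum_erase Finset.univ (fun j => (x j - y j).natAbs)
      (Finset.mem_univ i)
    have hsplit' : (x i - y i).natAbs + ∑ j ∈ Finset.univ.erase i, (x j - y j).natAbs =
        ∑ j, (x j - y j).natAbs := hsplit
    have h' : ∑ j, (x j - y j).natAbs = 1 := h
    have hfi : (x i - y i).natAbs = 1 := by omega
    have hrest : ∑ j ∈ Finset.univ.erase i, (x j - y j).natAbs = 0 := by omega
    have hz := Finset.sum_eq_zero_iff.mp hrest
    refine ⟨i, y i - x i, ?_, ?_⟩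
    · rw [← neg_sub (x i) (y i), Int.natAbs_neg]; exact hfi
    · funext j
      by_cases hj : j = i
      · subst hj; simp
      · have := hz j (Finset.mem_erase.mpr ⟨hj, Finset.mem_univ j⟩)
        rw [Function.update_of_ne hj]
        omega
  · rintro ⟨i, e, he, rfl⟩
    unfold ZAdj
    rw [Finset.sum_eq_single_of_mem i (Finset.mem_univ i)]
    · simp; omega
    · intro j _ hj
      rw [Function.update_of_ne hj]
      simp

def nbrMap {n : ℕ} (x : Vtx n) (p : Fin n × Bool) : Vtx n :=
  Function.update x p.1 (x p.1 + if p.2 then 1 else -1)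

lemma nbrMap_injective {n : ℕ} (x : Vtx n) : Function.Injective (nbrMap x) := by
  rintro ⟨i, a⟩ ⟨j, b⟩ h
  simp only [nbrMap] at h
  by_cases hij : i = j
  · subst hij
    have h2 := congrFun h i
    simp only [Function.update_self] at h2
    have : a = b := by rcases a <;> rcases b <;> simp_all <;> omega
    simp [this]
  · exfalso
    have h2 := congrFun h i
    rw [Function.update_self, Function.update_of_ne (Ne.symm (by exact fun hh => hij hh.symm))] at h2
    rcases a <;> simp at h2 <;> omega

lemma mem_nbr_iff {n : ℕ} {x y : Vtx n} : ZAdj x y ↔ ∃ p, nbrMap x p = y := by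
  rw [zadj_iff]
  constructor
  · rintro ⟨i, e, he, rfl⟩
    rcases Int.natAbs_eq_iff.mp he with h | h
    · exact ⟨(i, true), by simp [nbrMap, h]⟩
    · exact ⟨(i, false), by simp [nbrMap, h]⟩
  · rintro ⟨⟨i, b⟩, rfl⟩
    exact ⟨i, if b then 1 else -1, by rcases b <;> simp, rfl⟩

lemma nbr_eq_range {n : ℕ} (x : Vtx n) : {y | ZAdj x y} = Set.range (nbrMap x) := by
  ext y
  simp [Set.mem_range, mem_nbr_iff]

lemma nbr_finite {n : ℕ} (x : Vtx n) : {y | ZAdj x y}.Finite := by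
  rw [nbr_eq_range]; exact Set.finite_range _

lemma ncard_nbrs {n : ℕ} (x : Vtx n) : {y | ZAdj x y}.ncard = 2 * n := by
  rw [nbr_eq_range, ← Set.image_univ, Set.ncard_image_of_injective _ (nbrMap_injective x),
    Set.ncard_univ]
  simp [Nat.card_eq_fintype_card, Fintype.card_prod]
  ring

lemma nin_finite {n : ℕ} (M : Set (Vtx n)) (x : Vtx n) : {y | y ∈ M ∧ ZAdj x y}.Finite :=
  (nbr_finite x).subset (fun y hy => hy.2)

lemma nout_finite {n : ℕ} (M : Set (Vtx n)) (x : Vtx n) : {y | ZAdj x y ∧ y ∉ M}.Finite :=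
  (nbr_finite x).subset (fun y hy => hy.1)

lemma degIn_add {n : ℕ} (M : Set (Vtx n)) (x : Vtx n) :
    degIn M x + {y | ZAdj x y ∧ y ∉ M}.ncard = 2 * n := by
  have hu : {y | y ∈ M ∧ ZAdj x y} ∪ {y | ZAdj x y ∧ y ∉ M} = {y | ZAdj x y} := by
    ext y; constructor
    · rintro (⟨_, h⟩ | ⟨h, _⟩) <;> exact h
    · intro h; by_cases hM : y ∈ M
      · exact Or.inl ⟨hM, h⟩
      · exact Or.inr ⟨h, hM⟩
  have hd : Disjoint {y | y ∈ M ∧ ZAdj x y} {y | ZAdj x y ∧ y ∉ M} := by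
    rw [Set.disjoint_left]; rintro y ⟨hy, -⟩ ⟨-, hy'⟩; exact hy' hy
  rw [degIn, ← ncard_nbrs x, ← hu, Set.ncard_union_eq hd (nin_finite M x) (nout_finite M x)]

lemma mk_left_inj {n : ℕ} (x : Vtx n) : Function.Injective (fun z : Vtx n => (x, z)) :=
  fun a b h => by simpa using congrArg Prod.snd h

lemma mk_right_inj {n : ℕ} (x : Vtx n) : Function.Injective (fun z : Vtx n => (z, x)) :=
  fun a b h => by simpa using congrArg Prod.fst h


/-- in a minimal subgraph of `ℤⁿ` every vertex has degree at least `n`,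
and no edge of `M` has both endpoints of degree exactly `n`. -/
theorem min_degree {n : ℕ} {M : Set (Vtx n)} (hM : IsMinimal M) :
    (∀ x ∈ M, n ≤ degIn M x) ∧
    (∀ x ∈ M, ∀ y ∈ M, ZAdj x y → ¬(degIn M x = n ∧ degIn M y = n)) := by
  constructor
  · intro x hx
    have hsub : symmDiff (M \ {x}) M ⊆ {x} := by
      intro z hz
      rw [Set.mem_symmDiff] at hz
      rcases hz with ⟨hz1, hz2⟩ | ⟨hz1, hz2⟩
      · exact absurd hz1.1 hz2
      · by_contra hzx; exact hz2 ⟨hz1, hzx⟩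
    have hkey := hM {x} (Set.finite_singleton x) (M \ {x}) hsub
    have hA : dirBdry M ∩ dirE {x} = (fun z => (x, z)) '' {z | ZAdj x z ∧ z ∉ M} := by
      apply Set.Subset.antisymm
      · rintro ⟨a, b⟩ ⟨⟨hadj, haM, hbM⟩, -, -, -, hor⟩
        have ha : a = x := by
          rcases hor with h | h
          · exact h
          · exact absurd (by rw [show b = x from h]; exact hx) hbM
        subst ha
        exact ⟨b, ⟨hadj, hbM⟩, rfl⟩
      · rintro p ⟨z, ⟨hadj, hzM⟩, rfl⟩
        refine ⟨⟨hadj, hx, hzM⟩, hadj, Or.inl rfl, ?_, Or.inl rfl⟩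
        exact Or.inr ⟨fun hz => hzM (by rw [show z = x from hz]; exact hx), x, rfl, zadj_symm hadj⟩
    have hB : dirBdry (M \ {x}) ∩ dirE {x} = (fun z => (z, x)) '' {z | z ∈ M ∧ ZAdj x z} := by
      apply Set.Subset.antisymm
      · rintro ⟨a, b⟩ ⟨⟨hadj, haF, hbF⟩, -, -, -, hor⟩
        have hb : b = x := by
          rcases hor with h | h
          · exact absurd h haF.2
          · exact h
        subst hb
        exact ⟨a, ⟨haF.1, zadj_symm hadj⟩, rfl⟩
      · rintro p ⟨z, ⟨hzM, hadj⟩, rfl⟩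
        have hzx : z ≠ x := fun h => zadj_irrefl x (h ▸ hadj)
        refine ⟨⟨zadj_symm hadj, ⟨hzM, hzx⟩, fun h => h.2 rfl⟩, zadj_symm hadj, ?_, Or.inl rfl,
          Or.inr rfl⟩
        exact Or.inr ⟨hzx, x, rfl, zadj_symm hadj⟩
    rw [hA, hB, Set.ncard_image_of_injective _ (mk_left_inj x),
      Set.ncard_image_of_injective _ (mk_right_inj x)] at hkey
    have := degIn_add M x
    rw [degIn] at this ⊢
    omega
  · rintro x hx y hy hxy ⟨hdx, hdy⟩
    have hne : x ≠ y := zadj_ne hxy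
    have hnpos : 0 < n := zadj_npos hxy
    have hΩfin : ({x, y} : Set (Vtx n)).Finite := (Set.finite_singleton y).insert x
    have hsub : symmDiff (M \ {x, y}) M ⊆ {x, y} := by
      intro z hz
      rw [Set.mem_symmDiff] at hz
      rcases hz with ⟨hz1, hz2⟩ | ⟨hz1, hz2⟩
      · exact absurd hz1.1 hz2
      · by_contra hzx; exact hz2 ⟨hz1, hzx⟩
    have hkey := hM {x, y} hΩfin (M \ {x, y}) hsub
    have hA : dirBdry M ∩ dirE {x, y} =
        (fun z => (x, z)) '' {z | ZAdj x z ∧ z ∉ M} ∪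
        (fun z => (y, z)) '' {z | ZAdj y z ∧ z ∉ M} := by
      apply Set.Subset.antisymm
      · rintro ⟨a, b⟩ ⟨⟨hadj, haM, hbM⟩, -, -, -, hor⟩
        have ha : a = x ∨ a = y := by
          rcases hor with h | h
          · exact h
          · rcases h with h | h
            · exact absurd (by rw [show b = x from h]; exact hx) hbM
            · exact absurd (by rw [show b = y from h]; exact hy) hbM
        rcases ha with rfl | rfl
        · exact Or.inl ⟨b, ⟨hadj, hbM⟩, rfl⟩
        · exact Or.inr ⟨b, ⟨hadj, hbM⟩, rfl⟩
      · rintro p (⟨z, ⟨hadj, hzM⟩, rfl⟩ | ⟨z, ⟨hadj, hzM⟩, rfl⟩)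
        · refine ⟨⟨hadj, hx, hzM⟩, hadj, Or.inl (Or.inl rfl), ?_, Or.inl (Or.inl rfl)⟩
          refine Or.inr ⟨show z ∉ ({x, y} : Set (Vtx n)) from ?_, x, Or.inl rfl, zadj_symm hadj⟩
          rintro (rfl | rfl)
          · exact hzM hx
          · exact hzM hy
        · refine ⟨⟨hadj, hy, hzM⟩, hadj, Or.inl (Or.inr rfl), ?_, Or.inl (Or.inr rfl)⟩
          refine Or.inr ⟨show z ∉ ({x, y} : Set (Vtx n)) from ?_, y, Or.inr rfl, zadj_symm hadj⟩
          rintro (rfl | rfl)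
          · exact hzM hx
          · exact hzM hy
    have hB : dirBdry (M \ {x, y}) ∩ dirE {x, y} =
        (fun z => (z, x)) '' ({z | z ∈ M ∧ ZAdj x z} \ {y}) ∪
        (fun z => (z, y)) '' ({z | z ∈ M ∧ ZAdj y z} \ {x}) := by
      apply Set.Subset.antisymm
      · rintro ⟨a, b⟩ ⟨⟨hadj, haF, hbF⟩, -, -, -, hor⟩
        have haM := haF.1
        have hax : a ≠ x := fun h => haF.2 (Or.inl h)
        have hay : a ≠ y := fun h => haF.2 (Or.inr h)
        have hb : b = x ∨ b = y := by
          rcases hor with h | h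
          · rcases h with h | h
            · exact absurd h hax
            · exact absurd h hay
          · exact h
        rcases hb with rfl | rfl
        · exact Or.inl ⟨a, ⟨⟨haM, zadj_symm hadj⟩, hay⟩, rfl⟩
        · exact Or.inr ⟨a, ⟨⟨haM, zadj_symm hadj⟩, hax⟩, rfl⟩
      · rintro p (⟨z, ⟨⟨hzM, hadj⟩, hzy⟩, rfl⟩ | ⟨z, ⟨⟨hzM, hadj⟩, hzx⟩, rfl⟩)
        · have hzx : z ≠ x := fun h => zadj_irrefl x (h ▸ hadj)
          have hzy' : z ≠ y := hzy
          have hznot : z ∉ ({x, y} : Set (Vtx n)) := by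
            rintro (rfl | rfl)
            · exact hzx rfl
            · exact hzy' rfl
          refine ⟨⟨zadj_symm hadj, ⟨hzM, hznot⟩, fun h => h.2 (Or.inl rfl)⟩, zadj_symm hadj,
            Or.inr ⟨hznot, x, Or.inl rfl, zadj_symm hadj⟩, Or.inl (Or.inl rfl),
            Or.inr (Or.inl rfl)⟩
        · have hzy : z ≠ y := fun h => zadj_irrefl y (h ▸ hadj)
          have hzx' : z ≠ x := hzx
          have hznot : z ∉ ({x, y} : Set (Vtx n)) := by
            rintro (rfl | rfl)
            · exact hzx' rfl
            · exact hzy rfl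
          refine ⟨⟨zadj_symm hadj, ⟨hzM, hznot⟩, fun h => h.2 (Or.inr rfl)⟩, zadj_symm hadj,
            Or.inr ⟨hznot, y, Or.inr rfl, zadj_symm hadj⟩, Or.inl (Or.inr rfl),
            Or.inr (Or.inr rfl)⟩
    have hdisjA : Disjoint ((fun z => (x, z)) '' {z | ZAdj x z ∧ z ∉ M})
        ((fun z => (y, z)) '' {z | ZAdj y z ∧ z ∉ M}) := by
      rw [Set.disjoint_left]
      rintro p ⟨z, -, rfl⟩ ⟨w, -, hw⟩
      exact hne (by simpa using (congrArg Prod.fst hw).symm)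
    have hdisjB : Disjoint ((fun z => (z, x)) '' ({z | z ∈ M ∧ ZAdj x z} \ {y}))
        ((fun z => (z, y)) '' ({z | z ∈ M ∧ ZAdj y z} \ {x})) := by
      rw [Set.disjoint_left]
      rintro p ⟨z, -, rfl⟩ ⟨w, -, hw⟩
      exact hne (by simpa using (congrArg Prod.snd hw).symm)
    have hAcard : (dirBdry M ∩ dirE {x, y}).ncard = n + n := by
      rw [hA, Set.ncard_union_eq hdisjA ((nout_finite M x).image _) ((nout_finite M y).image _),
        Set.ncard_image_of_injective _ (mk_left_inj x),
        Set.ncard_image_of_injective _ (mk_left_inj y)]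
      have h1 := degIn_add M x
      have h2 := degIn_add M y
      rw [hdx] at h1
      rw [hdy] at h2
      omega
    have hBcard : (dirBdry (M \ {x, y}) ∩ dirE {x, y}).ncard = (n - 1) + (n - 1) := by
      rw [hB, Set.ncard_union_eq hdisjB (((nin_finite M x).diff).image _)
        (((nin_finite M y).diff).image _),
        Set.ncard_image_of_injective _ (mk_right_inj x),
        Set.ncard_image_of_injective _ (mk_right_inj y),
        Set.ncard_diff_singleton_of_mem (show y ∈ {z | z ∈ M ∧ ZAdj x z} from ⟨hy, hxy⟩),
        Set.ncard_diff_singleton_of_mem (show x ∈ {z | z ∈ M ∧ ZAdj y z} from ⟨hx, zadj_symm hxy⟩)]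
      rw [show {z | z ∈ M ∧ ZAdj x z}.ncard = degIn M x from rfl,
        show {z | z ∈ M ∧ ZAdj y z}.ncard = degIn M y from rfl, hdx, hdy]
    rw [hAcard, hBcard] at hkey
    omega
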